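/- Let G be an AH-algebra, let g ∈ G be the supremum (respectively, the infimum) in G of an ascending (respectively, descending) sequence (gₙ)_{n∈ℕ} of pairwise commuting elements of G, and suppose 0 ≤ h ∈ G with hCgₙ for all n ∈ ℕ. Then gh = hg and gh is the supremum (respectively, the infimum) in G of the sequence (gₙh)_{n∈ℕ}. -/

import Mathlib

/-- An e-ring `(R,E)`: an associative ring `R` with unity together with a set `E ⊆ R`
of effects, satisfying the Foulis axioms.  `E⁺` is realized as the additive submonoid
closure of `E` (the set of all finite sums of effects). -/
structure ERing (R : Type*) [Ring R] where
  E : Set R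
  zero_mem : (0 : R) ∈ E
  one_mem : (1 : R) ∈ E
  compl_mem : ∀ e ∈ E, 1 - e ∈ E
  epos_i : ∀ a ∈ AddSubmonoid.closure E, -a ∈ AddSubmonoid.closure E → a = 0
  epos_ii : ∀ a ∈ AddSubmonoid.closure E, 1 - a ∈ AddSubmonoid.closure E → a ∈ E
  epos_iii : ∀ a ∈ AddSubmonoid.closure E, ∀ b ∈ AddSubmonoid.closure E,
    a * b = b * a → a * b ∈ AddSubmonoid.closure E
  epos_iv : ∀ a ∈ AddSubmonoid.closure E, ∀ b ∈ AddSubmonoid.closure E,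
    a * b * a ∈ AddSubmonoid.closure E
  epos_v : ∀ a ∈ AddSubmonoid.closure E, ∀ b ∈ AddSubmonoid.closure E,
    a * b * a = 0 → a * b = 0 ∧ b * a = 0
  epos_vi : ∀ a ∈ AddSubmonoid.closure E, ∀ b ∈ AddSubmonoid.closure E,
    (a - b) ^ 2 ∈ AddSubmonoid.closure E
  zero_ne_one : (0 : R) ≠ 1

namespace ERing

variable {R : Type*} [Ring R] (er : ERing R)

/-- `E⁺`, the set of all finite sums of effects; the positive cone of the directed group. -/
def Epos : Set R := (AddSubmonoid.closure er.E : Set R)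

/-- The directed group `G = E⁺ - E⁺` of the e-ring. -/
def G : Set R := {g | ∃ a ∈ er.Epos, ∃ b ∈ er.Epos, g = a - b}

/-- The partial order on the directed group: `g ≤ h` iff `h - g ∈ E⁺`. -/
def le (g h : R) : Prop := h - g ∈ er.Epos

/-- The set of projections `P = {p ∈ G : p = p²}`. -/
def P : Set R := {p | p ∈ er.G ∧ p = p ^ 2}

/-- The commutant in `G` of a subset `A ⊆ G`. -/
def commutant (A : Set R) : Set R := {g | g ∈ er.G ∧ ∀ a ∈ A, g * a = a * g}

/-- The bicommutant in `G` of a subset `A ⊆ G`. -/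
def CC (A : Set R) : Set R := er.commutant (er.commutant A)

/-- `s` is the supremum of `A` within the subset `S` (w.r.t. the e-ring order). -/
def IsSupIn (S A : Set R) (s : R) : Prop :=
  s ∈ S ∧ (∀ a ∈ A, er.le a s) ∧ ∀ b ∈ S, (∀ a ∈ A, er.le a b) → er.le s b

/-- `s` is the infimum of `A` within the subset `S` (w.r.t. the e-ring order). -/
def IsInfIn (S A : Set R) (s : R) : Prop :=
  s ∈ S ∧ (∀ a ∈ A, er.le s a) ∧ ∀ b ∈ S, (∀ a ∈ A, er.le b a) → er.le b s

/-- Quadratic annihilation property. -/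
def HasQA : Prop := ∀ g ∈ er.G, ∀ h ∈ er.G, g * h ^ 2 * g = 0 → g * h = 0 ∧ h * g = 0

/-- Commutative Vigier property: every ascending sequence of pairwise commuting elements
of `G` bounded above in `G` has a supremum in `G` which double commutes with the sequence. -/
def HasCV : Prop :=
  ∀ g : ℕ → R, (∀ n, g n ∈ er.G) → (∀ n, er.le (g n) (g (n + 1))) →
    (∀ m n, g m * g n = g n * g m) → (∃ b ∈ er.G, ∀ n, er.le (g n) b) →
    ∃ s, er.IsSupIn er.G (Set.range g) s ∧ s ∈ er.CC (Set.range g)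

/-- `G` is an abstract Hermitian (AH) algebra: there is a semitransparent effect `½`,
`G` has quadratic annihilation, and `G` has the commutative Vigier property. -/
def IsAH : Prop := (∃ h ∈ er.E, h + h = 1) ∧ er.HasQA ∧ er.HasCV

end ERing

/-!
By the commutative Vigier property the supremum `g` of `(gₙ)` is the one lying in the
bicommutant of the sequence, so it commutes with `h`; then `(g - gₙ) h ≥ 0` makes `g h` an
upper bound of `(gₙ h)`. It is the least one by a scaling trick that only needs `½`: if
`b ≥ gₙ h` for all `n` and `h ≤ K = 2ᵐ`, then `K⁻¹ (b + K g - g h)` is an upper bound of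
`(gₙ)`, hence dominates `g`, which says `g h ≤ b`. The infimum case is the supremum case
for `(-gₙ)`.
-/

theorem commute_of_add_self_eq_one {R : Type*} [Ring R] {c : R} (hc : c + c = 1) (x : R) :
    Commute c x :=
  calc c * x = c * x * (c + c) := by rw [hc, mul_one]
    _ = (c + c) * x * c := by noncomm_ring
    _ = x * c := by rw [hc, one_mul]

theorem pow_mul_two_pow_of_add_self_eq_one {R : Type*} [Ring R] {c : R} (hc : c + c = 1)
    (m : ℕ) : c ^ m * 2 ^ m = 1 := by
  rw [← (commute_of_add_self_eq_one hc 2).mul_pow, mul_two, hc, one_pow]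

namespace ERing

variable {R : Type*} [Ring R] (er : ERing R)

lemma mem_Epos_of_mem_E {e : R} (he : e ∈ er.E) : e ∈ er.Epos :=
  AddSubmonoid.subset_closure he

lemma add_mem_Epos {a b : R} (ha : a ∈ er.Epos) (hb : b ∈ er.Epos) : a + b ∈ er.Epos :=
  AddSubmonoid.add_mem _ ha hb

lemma natCast_mul_mem_Epos (n : ℕ) {a : R} (ha : a ∈ er.Epos) : (n : R) * a ∈ er.Epos := by
  rw [← nsmul_eq_mul]
  exact AddSubmonoid.nsmul_mem _ ha n

lemma natCast_mem_Epos (n : ℕ) : (n : R) ∈ er.Epos := by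
  simpa using er.natCast_mul_mem_Epos n (er.mem_Epos_of_mem_E er.one_mem)

lemma mul_self_mem_Epos {x : R} (hx : x ∈ er.G) : x * x ∈ er.Epos := by
  obtain ⟨a, ha, b, hb, rfl⟩ := hx
  rw [← pow_two]
  exact er.epos_vi a ha b hb

lemma mem_G_of_mem_Epos {a : R} (ha : a ∈ er.Epos) : a ∈ er.G :=
  ⟨a, ha, 0, AddSubmonoid.zero_mem _, (sub_zero a).symm⟩

lemma add_mem_G {a b : R} (ha : a ∈ er.G) (hb : b ∈ er.G) : a + b ∈ er.G := by
  obtain ⟨x, hx, y, hy, rfl⟩ := ha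
  obtain ⟨u, hu, v, hv, rfl⟩ := hb
  exact ⟨x + u, er.add_mem_Epos hx hu, y + v, er.add_mem_Epos hy hv, by abel⟩

lemma neg_mem_G {a : R} (ha : a ∈ er.G) : -a ∈ er.G := by
  obtain ⟨x, hx, y, hy, rfl⟩ := ha
  exact ⟨y, hy, x, hx, neg_sub x y⟩

lemma sub_mem_G {a b : R} (ha : a ∈ er.G) (hb : b ∈ er.G) : a - b ∈ er.G := by
  simpa only [sub_eq_add_neg] using er.add_mem_G ha (er.neg_mem_G hb)

lemma natCast_mul_mem_G (n : ℕ) {a : R} (ha : a ∈ er.G) : (n : R) * a ∈ er.G := by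
  obtain ⟨x, hx, y, hy, rfl⟩ := ha
  exact ⟨_, er.natCast_mul_mem_Epos n hx, _, er.natCast_mul_mem_Epos n hy, mul_sub _ _ _⟩

lemma le_neg_neg_iff {a b : R} : er.le (-a) (-b) ↔ er.le b a := by
  simp only [le, neg_sub_neg]

lemma nonneg_iff {h : R} : er.le 0 h ↔ h ∈ er.Epos := by
  rw [le, sub_zero]

lemma eq_of_le_of_le {a b : R} (hab : er.le a b) (hba : er.le b a) : a = b :=
  (sub_eq_zero.mp (er.epos_i (b - a) hab (by rwa [neg_sub]))).symm

lemma mul_le_mul_of_nonneg_right {a b h : R} (hab : er.le a b) (hh : er.le 0 h)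
    (ha : Commute a h) (hb : Commute b h) : er.le (a * h) (b * h) := by
  have := er.epos_iii _ hab h (er.nonneg_iff.mp hh) (hb.sub_left ha).eq
  rwa [sub_mul] at this

lemma exists_le_two_pow {h : R} (hh : h ∈ er.Epos) : ∃ m : ℕ, er.le h (2 ^ m) := by
  obtain ⟨n, hn⟩ : ∃ n : ℕ, er.le h n := by
    induction (hh : h ∈ AddSubmonoid.closure er.E) using AddSubmonoid.closure_induction with
    | mem x hx => exact ⟨1, by simpa [le] using er.mem_Epos_of_mem_E (er.compl_mem x hx)⟩
    | zero => exact ⟨0, by simpa [le] using er.natCast_mem_Epos 0⟩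
    | add x y _ _ ihx ihy =>
      obtain ⟨n₁, h₁⟩ := ihx
      obtain ⟨n₂, h₂⟩ := ihy
      refine ⟨n₁ + n₂, ?_⟩
      have e : ((n₁ + n₂ : ℕ) : R) - (x + y) = ((n₁ : R) - x) + ((n₂ : R) - y) := by
        push_cast; abel
      simpa only [le, e] using er.add_mem_Epos h₁ h₂
  refine ⟨n, ?_⟩
  have e : ((2 : R) ^ n) - h = ((2 ^ n - n : ℕ) : R) + ((n : R) - h) := by
    rw [Nat.cast_sub Nat.lt_two_pow_self.le]; push_cast; abel
  simpa only [le, e] using er.add_mem_Epos (er.natCast_mem_Epos _) hn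

lemma IsSupIn.eq {S A : Set R} {s t : R} (hs : er.IsSupIn S A s) (ht : er.IsSupIn S A t) :
    s = t :=
  er.eq_of_le_of_le (hs.2.2 t ht.1 ht.2.1) (ht.2.2 s hs.1 hs.2.1)

lemma isInfIn_range_iff {f : ℕ → R} {s : R} :
    er.IsInfIn er.G (Set.range f) s ↔ er.IsSupIn er.G (Set.range (-f)) (-s) := by
  have hG : ∀ b, -b ∈ er.G ↔ b ∈ er.G :=
    fun b => ⟨fun hb => by simpa using er.neg_mem_G hb, er.neg_mem_G⟩
  simp only [IsInfIn, IsSupIn, Set.forall_mem_range, Pi.neg_apply, le_neg_neg_iff, hG]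
  refine and_congr_right fun _ => and_congr_right fun _ =>
    ⟨fun H b hb hbf => ?_, fun H b hb hbf => ?_⟩
  · rw [← neg_neg b, le_neg_neg_iff]
    exact H (-b) (er.neg_mem_G hb) fun n => by rw [← le_neg_neg_iff, neg_neg]; exact hbf n
  · rw [← le_neg_neg_iff]
    exact H (-b) (er.neg_mem_G hb) fun n => by rw [le_neg_neg_iff]; exact hbf n

section Half

variable {er} {c : R}

lemma pow_mul_mem_Epos (hc : c ∈ er.E) (hc2 : c + c = 1) (m : ℕ) {a : R} (ha : a ∈ er.Epos) :
    c ^ m * a ∈ er.Epos := by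
  induction m with
  | zero => simpa using ha
  | succ k ih =>
    rw [pow_succ', mul_assoc]
    exact er.epos_iii c (er.mem_Epos_of_mem_E hc) _ ih (commute_of_add_self_eq_one hc2 _)

lemma pow_mul_mem_G (hc : c ∈ er.E) (hc2 : c + c = 1) (m : ℕ) {a : R} (ha : a ∈ er.G) :
    c ^ m * a ∈ er.G := by
  obtain ⟨x, hx, y, hy, rfl⟩ := ha
  exact ⟨_, pow_mul_mem_Epos hc hc2 m hx, _, pow_mul_mem_Epos hc hc2 m hy, mul_sub _ _ _⟩

lemma mul_mem_G (hc : c ∈ er.E) (hc2 : c + c = 1) {x y : R} (hx : x ∈ er.G) (hy : y ∈ er.G)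
    (hxy : Commute x y) : x * y ∈ er.G := by
  have polarization : (x + y) * (x + y) - (x - y) * (x - y) = 2 ^ 2 * (x * y) :=
    calc (x + y) * (x + y) - (x - y) * (x - y) = 2 * (x * y) + 2 * (y * x) := by noncomm_ring
      _ = 2 ^ 2 * (x * y) := by rw [← hxy.eq]; noncomm_ring
  have key : x * y = c ^ 2 * ((x + y) * (x + y)) - c ^ 2 * ((x - y) * (x - y)) := by
    rw [← mul_sub, polarization, ← mul_assoc, pow_mul_two_pow_of_add_self_eq_one hc2, one_mul]
  rw [key]
  exact er.sub_mem_G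
    (pow_mul_mem_G hc hc2 2 (er.mem_G_of_mem_Epos (er.mul_self_mem_Epos (er.add_mem_G hx hy))))
    (pow_mul_mem_G hc hc2 2 (er.mem_G_of_mem_Epos (er.mul_self_mem_Epos (er.sub_mem_G hx hy))))

lemma mul_le_of_forall_mul_le (hc : c ∈ er.E) (hc2 : c + c = 1) {f : ℕ → R} {g h b : R}
    (hg : er.IsSupIn er.G (Set.range f) g) (hh : h ∈ er.Epos) (hgh : Commute g h)
    (hfh : ∀ n, Commute (f n) h) (hb : b ∈ er.G) (hfb : ∀ n, er.le (f n * h) b) :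
    er.le (g * h) b := by
  obtain ⟨m, hm⟩ := er.exists_le_two_pow hh
  set K : R := 2 ^ m
  have hK : ∀ x, Commute K x := fun x => (Commute.ofNat_left 2 x).pow_left m
  have hcK : c ^ m * K = 1 := pow_mul_two_pow_of_add_self_eq_one hc2 m
  have hKG : K = ((2 ^ m : ℕ) : R) := by push_cast; rfl
  set t := c ^ m * (b + K * g - g * h) with ht
  have htG : t ∈ er.G := pow_mul_mem_G hc hc2 m (er.sub_mem_G
    (er.add_mem_G hb (hKG ▸ er.natCast_mul_mem_G _ hg.1))
    (mul_mem_G hc hc2 hg.1 (er.mem_G_of_mem_Epos hh) hgh))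
  have hKh : er.le 0 (K - h) := er.nonneg_iff.mpr hm
  have hft : ∀ n, er.le (f n) t := fun n => by
    have e : t - f n = c ^ m * ((b - f n * h) + (g * (K - h) - f n * (K - h))) := by
      rw [show (b - f n * h) + (g * (K - h) - f n * (K - h)) = (b + K * g - g * h) - K * f n by
        rw [mul_sub, mul_sub, (hK g).eq, (hK (f n)).eq]; abel,
        mul_sub, ← mul_assoc, hcK, one_mul]
    rw [le, e]
    exact pow_mul_mem_Epos hc hc2 m (er.add_mem_Epos (hfb n)
      (er.mul_le_mul_of_nonneg_right (hg.2.1 _ ⟨n, rfl⟩) hKh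
        ((hK _).symm.sub_right (hfh n)) ((hK g).symm.sub_right hgh)))
  have hgt : er.le g t := hg.2.2 t htG (Set.forall_mem_range.2 hft)
  have e : b - g * h = K * (t - g) := by
    rw [ht, mul_sub, ← mul_assoc, (hK _).eq, hcK, one_mul]; abel
  rw [le, e, hKG]
  exact er.natCast_mul_mem_Epos _ hgt

end Half

lemma commute_of_isSupIn (hCV : er.HasCV) {f : ℕ → R} {g h : R} (hf : ∀ n, f n ∈ er.G)
    (hmono : ∀ n, er.le (f n) (f (n + 1))) (hcomm : ∀ m n, Commute (f m) (f n))
    (hg : er.IsSupIn er.G (Set.range f) g) (hh : h ∈ er.G) (hhf : ∀ n, Commute h (f n)) :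
    Commute g h := by
  obtain ⟨s, hs, hsCC⟩ := hCV f hf hmono hcomm ⟨g, hg.1, fun n => hg.2.1 _ ⟨n, rfl⟩⟩
  obtain rfl := IsSupIn.eq er hg hs
  exact hsCC.2 h ⟨hh, Set.forall_mem_range.2 hhf⟩

theorem commute_and_isSupIn_range_mul (hAH : er.IsAH) {f : ℕ → R} {g h : R}
    (hf : ∀ n, f n ∈ er.G) (hcomm : ∀ m n, Commute (f m) (f n))
    (hmono : ∀ n, er.le (f n) (f (n + 1))) (hg : er.IsSupIn er.G (Set.range f) g)
    (hh : h ∈ er.G) (hh0 : er.le 0 h) (hhf : ∀ n, Commute h (f n)) :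
    Commute g h ∧ er.IsSupIn er.G (Set.range fun n => f n * h) (g * h) := by
  obtain ⟨c, hc, hc2⟩ := hAH.1
  have hgh := er.commute_of_isSupIn hAH.2.2 hf hmono hcomm hg hh hhf
  refine ⟨hgh, mul_mem_G hc hc2 hg.1 hh hgh, Set.forall_mem_range.2 fun n => ?_,
    fun b hb hfb => mul_le_of_forall_mul_le hc hc2 hg (er.nonneg_iff.mp hh0) hgh
      (fun n => (hhf n).symm) hb fun n => hfb _ ⟨n, rfl⟩⟩
  exact er.mul_le_mul_of_nonneg_right (hg.2.1 _ ⟨n, rfl⟩) hh0 (hhf n).symm hgh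

end ERing

/-- In an AH-algebra, if `g` is the supremum (resp. infimum) in `G` of
an ascending (resp. descending) sequence `(gₙ)` of pairwise commuting elements, and
`0 ≤ h ∈ G` commutes with every `gₙ`, then `gh = hg` is the supremum (resp. infimum)
in `G` of `(gₙh)`. -/
theorem stmt5 {R : Type*} [Ring R] (er : ERing R) (hAH : er.IsAH)
    (gseq : ℕ → R) (g h : R)
    (hgseq : ∀ n, gseq n ∈ er.G)
    (hcomm : ∀ m n, gseq m * gseq n = gseq n * gseq m)
    (hh : h ∈ er.G) (hh0 : er.le 0 h)
    (hhC : ∀ n, h * gseq n = gseq n * h) :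
    ((∀ n, er.le (gseq n) (gseq (n + 1))) → er.IsSupIn er.G (Set.range gseq) g →
      g * h = h * g ∧ er.IsSupIn er.G (Set.range fun n => gseq n * h) (g * h)) ∧
    ((∀ n, er.le (gseq (n + 1)) (gseq n)) → er.IsInfIn er.G (Set.range gseq) g →
      g * h = h * g ∧ er.IsInfIn er.G (Set.range fun n => gseq n * h) (g * h)) := by
  refine ⟨fun hmono hsup =>
    er.commute_and_isSupIn_range_mul hAH hgseq hcomm hmono hsup hh hh0 hhC, fun hanti hinf => ?_⟩
  rw [er.isInfIn_range_iff] at hinf ⊢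
  have hneg := er.commute_and_isSupIn_range_mul hAH (f := -gseq)
    (fun n => er.neg_mem_G (hgseq n)) (fun m n => (Commute.neg_left (hcomm m n)).neg_right)
    (fun n => er.le_neg_neg_iff.mpr (hanti n)) hinf hh hh0 (fun n => Commute.neg_right (hhC n))
  have e : (-fun n => gseq n * h) = fun n => (-gseq) n * h := by
    funext n; simp only [Pi.neg_apply, neg_mul]
  rw [e, ← neg_mul]
  exact ⟨Commute.neg_left_iff.mp hneg.1, hneg.2⟩
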